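/- arXiv:1806.07648 — 4 statements merged into one kernel-verified Lean document; each statement's English description precedes it below -/
import Mathlib

section
/- For every n ≥ 1, all complex roots of the polynomial t ↦ binom((n+1)·t + n, n) have real part lying in the closed interval [-1 + 1/(n+1), -1/(n+1)]; that is, projective n-space polarised by its anticanonical bundle satisfies the narrow canonical strip hypothesis. -/
/-! The Hilbert polynomial splits into the linear factors `(n+1)t + k`, `1 ≤ k ≤ n`, so its roots
are the real numbers `-k/(n+1)`, which lie between `-n/(n+1)` and `-1/(n+1)`. -/

open Polynomial

/-- The Hilbert polynomial of ℙⁿ with respect to its anticanonical bundle,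
`binom((n+1)t + n, n) = ∏_{i=1}^{n} ((n+1)t + i) / n!`, as a complex polynomial. -/
noncomputable def hilbertPn (n : ℕ) : Polynomial ℂ :=
  C ((n.factorial : ℂ)⁻¹) *
    ∏ i ∈ Finset.range n, (C ((n : ℂ) + 1) * X + C ((i : ℂ) + 1))

theorem hilbertPn_eval_eq_zero_iff (n : ℕ) (z : ℂ) :
    (hilbertPn n).eval z = 0 ↔ ∃ i < n, z = ((-(((i : ℝ) + 1) / ((n : ℝ) + 1)) : ℝ) : ℂ) := by
  have hn : (n : ℂ) + 1 ≠ 0 := by exact_mod_cast n.succ_ne_zero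
  simp only [hilbertPn, eval_mul, eval_C, eval_prod, eval_add, eval_X, mul_eq_zero,
    inv_eq_zero, Nat.cast_eq_zero, n.factorial_ne_zero, false_or, Finset.prod_eq_zero_iff,
    Finset.mem_range]
  refine exists_congr fun i => and_congr_right fun _ => ?_
  push_cast
  constructor
  · intro h
    field_simp
    linear_combination h
  · rintro rfl
    field_simp
    ring

theorem neg_succ_div_succ_mem_Icc {n i : ℕ} (hi : i < n) :
    -(((i : ℝ) + 1) / ((n : ℝ) + 1)) ∈ Set.Icc (-1 + 1 / ((n : ℝ) + 1)) (-1 / ((n : ℝ) + 1)) := by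
  have hin : (i : ℝ) + 1 ≤ n := by exact_mod_cast hi
  constructor
  · rw [show (-1 : ℝ) + 1 / ((n : ℝ) + 1) = -((n : ℝ) / ((n : ℝ) + 1)) by field_simp; ring,
      neg_le_neg_iff]
    gcongr
  · rw [neg_div, neg_le_neg_iff]
    gcongr
    linarith

theorem projective_space_narrow_canonical_strip_general (n : ℕ) :
    ∀ z : ℂ, (hilbertPn n).eval z = 0 →
      z.re ∈ Set.Icc (-1 + 1 / ((n : ℝ) + 1)) (-1 / ((n : ℝ) + 1)) := by
  intro z hz
  obtain ⟨i, hi, rfl⟩ := (hilbertPn_eval_eq_zero_iff n z).mp hz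
  rw [Complex.ofReal_re]
  exact neg_succ_div_succ_mem_Icc hi

theorem projective_space_narrow_canonical_strip (n : ℕ) (hn : 1 ≤ n) :
    ∀ z : ℂ, (hilbertPn n).eval z = 0 →
      z.re ∈ Set.Icc (-1 + 1 / ((n : ℝ) + 1)) (-1 / ((n : ℝ) + 1)) :=
  projective_space_narrow_canonical_strip_general n
end

section
/- For every natural number k, the trigonometric identity ∑_{j=1}^{2k+1} (-1)^{j-1} / sin²(jπ/(2k+2)) = (2k² + 4k + 3)/3 holds. -/
/-!
Since `(-1) ^ (j - 1) = 1 - 2 · [j even]`, the alternating sum equals `S (2k + 2) - 2 S (k + 1)`,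
where `S n = ∑_{0 < j < n} 1 / sin² (jπ / n) = (n² - 1) / 3`.

For `S n`, put `w = exp (2πij / n) ≠ 1` and `A w = ∑_{i < n} i wⁱ`. Then `(w - 1) A w = n` and
`(w - 1) (w⁻¹ - 1) = 4 sin² (jπ / n)`, so `1 / sin² (jπ / n) = 4 A w A w⁻¹ / n²`. Summed over all
`n`-th roots of unity, orthogonality turns `∑ A w A w⁻¹` into `n ∑ i²`; the root `w = 1`
contributes `(∑ i)²`, and what remains is `(n² - 1) / 3`.
-/

open Real Finset

section Sums

variable {R : Type*} [CommRing R]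

theorem sum_range_natCast_mul_two (n : ℕ) :
    (∑ i ∈ range n, (i : R)) * 2 = n * (n - 1) := by
  induction n with
  | zero => simp
  | succ n ih => rw [sum_range_succ, add_mul, ih]; push_cast; ring

theorem sum_range_natCast_sq_mul_six (n : ℕ) :
    (∑ i ∈ range n, (i : R) ^ 2) * 6 = n * (n - 1) * (2 * n - 1) := by
  induction n with
  | zero => simp
  | succ n ih => rw [sum_range_succ, add_mul, ih]; push_cast; ring

theorem sub_one_mul_sum_range_natCast_mul_pow (w : R) (n : ℕ) :
    (w - 1) * ∑ i ∈ range n, (i : R) * w ^ i = (n - 1) * w ^ n - ∑ i ∈ range n, w ^ i + 1 := by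
  induction n with
  | zero => simp
  | succ n ih => rw [sum_range_succ, sum_range_succ, mul_add, ih]; push_cast; ring

theorem sum_Ico_neg_one_pow_sub_one_mul (f : ℕ → R) (k : ℕ) :
    ∑ j ∈ Ico 1 (2 * k + 2), (-1) ^ (j - 1) * f j =
      ∑ j ∈ Ico 1 (2 * k + 2), f j - 2 * ∑ i ∈ Ico 1 (k + 1), f (2 * i) := by
  induction k with
  | zero => simp
  | succ k ih =>
    have hodd : (-1 : R) ^ (2 * k + 1) = -1 := by rw [pow_succ, pow_mul, neg_one_sq, one_pow, one_mul]
    have heven : (-1 : R) ^ (2 * k + 2) = 1 := by rw [← mul_add_one, pow_mul, neg_one_sq, one_pow]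
    have h₁ : 1 ≤ 2 * k + 2 := by omega
    have h₂ : 1 ≤ 2 * k + 2 + 1 := by omega
    have h₃ : 1 ≤ k + 1 := by omega
    rw [show 2 * (k + 1) + 2 = 2 * k + 2 + 1 + 1 by ring, sum_Ico_succ_top h₂, sum_Ico_succ_top h₁,
      sum_Ico_succ_top h₂, sum_Ico_succ_top h₁, sum_Ico_succ_top h₃, ih, Nat.add_sub_cancel,
      show 2 * k + 2 - 1 = 2 * k + 1 by omega, hodd, heven, mul_add_one]
    ring

end Sums

section RootsOfUnity

variable {K : Type*} [Field K]

theorem sub_one_mul_sum_range_natCast_mul_pow_of_pow_eq_one {w : K} {n : ℕ} (hw : w ^ n = 1)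
    (hw1 : w ≠ 1) : (w - 1) * ∑ i ∈ range n, (i : K) * w ^ i = n := by
  rw [sub_one_mul_sum_range_natCast_mul_pow, hw, geom_sum_eq hw1, hw, sub_self, zero_div]
  ring

namespace IsPrimitiveRoot

variable {ζ : K} {n : ℕ}

theorem sum_pow_mul_inv_pow (hζ : IsPrimitiveRoot ζ n) {i i' : ℕ} (hi : i < n) (hi' : i' < n) :
    ∑ j ∈ range n, (ζ ^ j) ^ i * (ζ ^ j)⁻¹ ^ i' = if i = i' then (n : K) else 0 := by
  have hζ0 : ζ ≠ 0 := hζ.ne_zero (by omega)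
  have hpow (j : ℕ) : (ζ ^ j) ^ i * (ζ ^ j)⁻¹ ^ i' = (ζ ^ i / ζ ^ i') ^ j := by
    rw [div_pow, inv_pow, ← pow_mul, ← pow_mul, ← pow_mul, ← pow_mul, mul_comm i, mul_comm i',
      div_eq_mul_inv]
  simp_rw [hpow]
  split_ifs with h
  · simp [h, hζ0]
  · have hu1 : ζ ^ i / ζ ^ i' ≠ 1 := fun h1 =>
      h (hζ.pow_inj hi hi' ((div_eq_one_iff_eq (pow_ne_zero _ hζ0)).mp h1))
    have hun : (ζ ^ i / ζ ^ i') ^ n = 1 := by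
      rw [div_pow, pow_right_comm ζ i, pow_right_comm ζ i', hζ.pow_eq_one, one_pow, one_pow, div_one]
    rw [geom_sum_eq hu1, hun, sub_self, zero_div]

theorem sum_range_mul_sum_range_inv_pow (hζ : IsPrimitiveRoot ζ n) (a b : ℕ → K) :
    ∑ j ∈ range n, (∑ i ∈ range n, a i * (ζ ^ j) ^ i) * ∑ i ∈ range n, b i * (ζ ^ j)⁻¹ ^ i =
      n * ∑ i ∈ range n, a i * b i := by
  calc _ = ∑ i ∈ range n, ∑ i' ∈ range n,
        a i * b i' * ∑ j ∈ range n, (ζ ^ j) ^ i * (ζ ^ j)⁻¹ ^ i' := by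
        simp_rw [sum_mul_sum, mul_sum]
        rw [sum_comm]
        refine sum_congr rfl fun i _ => ?_
        rw [sum_comm]
        refine sum_congr rfl fun i' _ => sum_congr rfl fun j _ => ?_
        ring
    _ = ∑ i ∈ range n, n * (a i * b i) := by
        refine sum_congr rfl fun i hi => ?_
        rw [sum_congr rfl fun i' hi' => by
          rw [hζ.sum_pow_mul_inv_pow (mem_range.mp hi) (mem_range.mp hi'), mul_ite, mul_zero]]
        rw [sum_ite_eq, if_pos hi]
        ring
    _ = _ := (mul_sum ..).symm

end IsPrimitiveRoot

end RootsOfUnity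

namespace Complex

theorem exp_two_mul_I_sub_one_mul_inv_sub_one (θ : ℂ) :
    (cexp (2 * θ * I) - 1) * ((cexp (2 * θ * I))⁻¹ - 1) = 4 * sin θ ^ 2 := by
  have hcos := two_cos (2 * θ)
  rw [cos_two_mul_eq_one_sub] at hcos
  have hinv : (cexp (2 * θ * I))⁻¹ = cexp (-(2 * θ) * I) := by rw [← exp_neg]; ring_nf
  have hprod : cexp (2 * θ * I) * cexp (-(2 * θ) * I) = 1 := by rw [← exp_add]; ring_nf; simp
  rw [hinv]
  linear_combination hprod + hcos

theorem inv_sin_sq_eq_mul_sum_range_mul_sum_range {θ : ℂ} {n : ℕ} (hn : n ≠ 0)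
    (hw : cexp (2 * θ * I) ^ n = 1) (hw1 : cexp (2 * θ * I) ≠ 1) :
    (sin θ ^ 2)⁻¹ = 4 / n ^ 2 * ((∑ i ∈ range n, (i : ℂ) * cexp (2 * θ * I) ^ i) *
      ∑ i ∈ range n, (i : ℂ) * (cexp (2 * θ * I))⁻¹ ^ i) := by
  set w := cexp (2 * θ * I)
  have hA := sub_one_mul_sum_range_natCast_mul_pow_of_pow_eq_one hw hw1
  have hA' := sub_one_mul_sum_range_natCast_mul_pow_of_pow_eq_one (w := w⁻¹)
    (by rw [inv_pow, hw, inv_one]) (inv_ne_one.mpr hw1)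
  have key : 4 * sin θ ^ 2 * ((∑ i ∈ range n, (i : ℂ) * w ^ i) * ∑ i ∈ range n, (i : ℂ) * w⁻¹ ^ i)
      = n ^ 2 := by
    rw [← exp_two_mul_I_sub_one_mul_inv_sub_one θ]
    linear_combination (w⁻¹ - 1) * (∑ i ∈ range n, (i : ℂ) * w⁻¹ ^ i) * hA + n * hA'
  refine inv_eq_of_mul_eq_one_right ?_
  calc _ = 4 * sin θ ^ 2 * ((∑ i ∈ range n, (i : ℂ) * w ^ i) * ∑ i ∈ range n, (i : ℂ) * w⁻¹ ^ i)
        / n ^ 2 := by ring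
    _ = 1 := by rw [key, div_self (pow_ne_zero _ (Nat.cast_ne_zero.mpr hn))]

end Complex

theorem Real.sum_Ico_inv_sin_sq_mul_pi_div {n : ℕ} (hn : n ≠ 0) :
    ∑ j ∈ Ico 1 n, (sin (j * π / n) ^ 2)⁻¹ = ((n : ℝ) ^ 2 - 1) / 3 := by
  apply Complex.ofReal_injective
  push_cast
  have hζ := Complex.isPrimitiveRoot_exp n hn
  set ζ := Complex.exp (2 * π * Complex.I / n)
  set A : ℂ → ℂ := fun w => ∑ i ∈ range n, (i : ℂ) * w ^ i
  have hterm : ∀ j ∈ Ico 1 n,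
      (Complex.sin (j * π / n) ^ 2)⁻¹ = 4 / n ^ 2 * (A (ζ ^ j) * A (ζ ^ j)⁻¹) := by
    intro j hj
    obtain ⟨hj1, hjn⟩ := mem_Ico.mp hj
    have hw : Complex.exp (2 * (j * π / n) * Complex.I) = ζ ^ j := by
      rw [← Complex.exp_nat_mul]; ring_nf
    have hpow : (ζ ^ j) ^ n = 1 := by rw [pow_right_comm, hζ.pow_eq_one, one_pow]
    have hne : ζ ^ j ≠ 1 := hζ.pow_ne_one_of_pos_of_lt (by omega) hjn
    rw [← hw] at hpow hne ⊢
    exact Complex.inv_sin_sq_eq_mul_sum_range_mul_sum_range hn hpow hne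
  have hparseval := hζ.sum_range_mul_sum_range_inv_pow (fun i => (i : ℂ)) (fun i => (i : ℂ))
  rw [sum_range_eq_add_Ico _ (Nat.pos_of_ne_zero hn)] at hparseval
  simp only [pow_zero, inv_one, one_pow, mul_one] at hparseval
  have h1 := sum_range_natCast_mul_two (R := ℂ) n
  have h2 := sum_range_natCast_sq_mul_six (R := ℂ) n
  rw [sum_congr rfl hterm, ← mul_sum, eq_sub_of_add_eq' hparseval]
  simp only [← sq]
  have hn' : (n : ℂ) ≠ 0 := Nat.cast_ne_zero.mpr hn
  field_simp
  linear_combination 2 * (n : ℂ) * h2 - 3 * (2 * ∑ i ∈ range n, (i : ℂ) + n * (n - 1)) * h1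

theorem verlinde_genus_two_sum (k : ℕ) :
    ∑ j ∈ Finset.Icc 1 (2 * k + 1),
        (-1 : ℝ) ^ (j - 1) / (Real.sin ((j : ℝ) * π / (2 * (k : ℝ) + 2))) ^ 2 =
      (2 * (k : ℝ) ^ 2 + 4 * (k : ℝ) + 3) / 3 := by
  have hfull := sum_Ico_inv_sin_sq_mul_pi_div (n := 2 * k + 2) (by omega)
  have hhalf := sum_Ico_inv_sin_sq_mul_pi_div (n := k + 1) (by omega)
  push_cast at hfull hhalf
  have hdouble (i : ℕ) : ((2 * i : ℕ) : ℝ) * π / (2 * k + 2) = i * π / (k + 1) := by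
    push_cast; field_simp
  calc _ = ∑ j ∈ Ico 1 (2 * k + 2), (-1) ^ (j - 1) * (sin (j * π / (2 * k + 2)) ^ 2)⁻¹ := by
        rw [← Ico_add_one_right_eq_Icc]
        exact sum_congr rfl fun j _ => div_eq_mul_inv _ _
    _ = ∑ j ∈ Ico 1 (2 * k + 2), (sin (j * π / (2 * k + 2)) ^ 2)⁻¹
          - 2 * ∑ i ∈ Ico 1 (k + 1), (sin (i * π / (k + 1)) ^ 2)⁻¹ := by
        rw [sum_Ico_neg_one_pow_sub_one_mul]
        simp only [hdouble]
    _ = _ := by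
        rw [hfull, hhalf]
        ring
end

section
/- For every integer n ≥ 2, ∑_{j=1}^{n-1} 1/sin²(jπ/n) = (n² - 1)/3. -/
/-!
Put `ζ = exp (2πi/n)` and `z = ζ ^ j = exp (2 i x)` with `x = jπ/n`. Then `-4 sin² x · z = (z - 1)²`,
and since `(z - 1)²` acts as a second difference on coefficients, for an `n`-th root of unity
`z ≠ 1` one gets `(z - 1)² ∑_{k<n} k(n-k) z^k = 2nz`. Hence `1 / sin² x = -(2/n) ∑_{k<n} k(n-k) ζ^{jk}`.
Summing over `1 ≤ j ≤ n-1` and using `∑_{j=1}^{n-1} ζ^{jk} = -1` for `0 < k < n` leaves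
`(2/n) ∑_{k<n} k(n-k) = (n² - 1)/3`.
-/

open Real Finset

section CommRing
variable {R : Type*} [CommRing R]

theorem sub_one_sq_mul_sum_range_mul_pow (n : ℕ) (z : R) :
    (z - 1) ^ 2 * ∑ k ∈ range n, (k : R) * z ^ k =
      ((n : R) - 1) * z ^ (n + 1) - n * z ^ n + z := by
  induction n with
  | zero => simp
  | succ n ih =>
    rw [sum_range_succ, mul_add, ih]
    push_cast
    ring

theorem sub_one_sq_mul_sum_range_mul_sub_mul_pow (n : ℕ) (z : R) :
    (z - 1) ^ 2 * ∑ k ∈ range n, (k : R) * (n - k) * z ^ k =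
      ((n : R) + 1) * z + ((n : R) - 1) * z ^ (n + 1) - 2 * z ^ n + 2
        - 2 * ∑ k ∈ range n, z ^ k := by
  induction n with
  | zero => simp
  | succ n ih =>
    have hsplit : ∑ k ∈ range (n + 1), (k : R) * ((n + 1 : ℕ) - k) * z ^ k =
        ∑ k ∈ range (n + 1), (k : R) * (n - k) * z ^ k + ∑ k ∈ range (n + 1), (k : R) * z ^ k := by
      rw [← sum_add_distrib]
      exact sum_congr rfl fun k _ => by push_cast; ring
    rw [hsplit, mul_add, sub_one_sq_mul_sum_range_mul_pow, sum_range_succ, mul_add, ih,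
      sum_range_succ (fun k => z ^ k)]
    push_cast
    ring

theorem six_mul_sum_range_mul_sub (n : ℕ) :
    6 * ∑ k ∈ range n, (k : R) * (n - k) = (n : R) ^ 3 - n := by
  induction n with
  | zero => simp
  | succ n ih =>
    have hsplit : ∑ k ∈ range (n + 1), (k : R) * ((n + 1 : ℕ) - k) =
        ∑ k ∈ range (n + 1), (k : R) * (n - k) + ∑ k ∈ range (n + 1), (k : R) := by
      rw [← sum_add_distrib]
      exact sum_congr rfl fun k _ => by push_cast; ring
    have hgauss : (∑ k ∈ range (n + 1), (k : R)) * 2 = (n + 1) * n := by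
      simpa using congrArg (Nat.cast (R := R)) (sum_range_id_mul_two (n + 1))
    rw [hsplit, mul_add, sum_range_succ, mul_add, ih]
    push_cast
    linear_combination 3 * hgauss

end CommRing

section RootOfUnity
variable {R : Type*} [CommRing R] [IsDomain R] {n : ℕ} {z : R}

theorem sum_range_pow_eq_zero_of_pow_eq_one (hz : z ^ n = 1) (hz1 : z ≠ 1) :
    ∑ k ∈ range n, z ^ k = 0 := by
  have h := geom_sum_mul z n
  rw [hz, sub_self] at h
  exact (mul_eq_zero.mp h).resolve_right (sub_ne_zero.mpr hz1)

theorem sum_Icc_one_pow_eq_neg_one_of_pow_eq_one (hn : n ≠ 0) (hz : z ^ n = 1) (hz1 : z ≠ 1) :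
    ∑ j ∈ Icc 1 (n - 1), z ^ j = -1 := by
  have h := sum_range_pow_eq_zero_of_pow_eq_one hz hz1
  rw [range_eq_Ico, sum_eq_sum_Ico_succ_bot (Nat.pos_of_ne_zero hn),
    ← Icc_sub_one_right_eq_Ico_of_not_isMin (by simpa using hn)] at h
  linear_combination h

theorem sub_one_sq_mul_sum_range_mul_sub_mul_pow_of_pow_eq_one (hz : z ^ n = 1) (hz1 : z ≠ 1) :
    (z - 1) ^ 2 * ∑ k ∈ range n, (k : R) * (n - k) * z ^ k = 2 * n * z := by
  rw [sub_one_sq_mul_sum_range_mul_sub_mul_pow, sum_range_pow_eq_zero_of_pow_eq_one hz hz1,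
    pow_succ, hz]
  ring

end RootOfUnity

namespace Complex

theorem neg_four_mul_sin_sq_mul_exp (x : ℂ) :
    -4 * sin x ^ 2 * exp (2 * x * I) = (exp (2 * x * I) - 1) ^ 2 := by
  have hsin := two_sin x
  have hexp : exp (2 * x * I) = exp (x * I) ^ 2 := by rw [← exp_nat_mul]; ring_nf
  have hinv : exp (x * I) * exp (-x * I) = 1 := by rw [← exp_add]; simp
  rw [hexp]
  linear_combination (-exp (x * I) ^ 2 * (2 * sin x + (exp (-x * I) - exp (x * I)) * I)) * hsin
    + (-(exp (-x * I) - exp (x * I)) ^ 2 * exp (x * I) ^ 2) * I_sq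
    + (exp (x * I) * exp (-x * I) + 1 - 2 * exp (x * I) ^ 2) * hinv

theorem one_div_sin_sq_eq_sum_range {x : ℂ} {n : ℕ} (hn : n ≠ 0) (hz : exp (2 * x * I) ^ n = 1)
    (hz1 : exp (2 * x * I) ≠ 1) :
    1 / sin x ^ 2 = -(2 / n) * ∑ k ∈ range n, (k : ℂ) * (n - k) * exp (2 * x * I) ^ k := by
  have hF := sub_one_sq_mul_sum_range_mul_sub_mul_pow_of_pow_eq_one hz hz1
  rw [← neg_four_mul_sin_sq_mul_exp] at hF
  have hsin : sin x ≠ 0 := by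
    intro h
    have hsq := neg_four_mul_sin_sq_mul_exp x
    rw [h] at hsq
    exact hz1 (sub_eq_zero.mp ((pow_eq_zero_iff two_ne_zero).mp (by simpa using hsq.symm)))
  have hF' : 2 * sin x ^ 2 * ∑ k ∈ range n, (k : ℂ) * (n - k) * exp (2 * x * I) ^ k = -n := by
    refine mul_right_cancel₀ (exp_ne_zero (2 * x * I)) ?_
    linear_combination (-1 / 2 : ℂ) * hF
  have hn' : (n : ℂ) ≠ 0 := Nat.cast_ne_zero.mpr hn
  field_simp
  linear_combination hF'

end Complex

theorem sum_inv_sin_sq (n : ℕ) (hn : 2 ≤ n) :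
    ∑ j ∈ Finset.Icc 1 (n - 1), 1 / (Real.sin ((j : ℝ) * π / (n : ℝ))) ^ 2 =
      ((n : ℝ) ^ 2 - 1) / 3 := by
  have hn0 : n ≠ 0 := by omega
  set ζ := Complex.exp (2 * π * Complex.I / n)
  have hζ : IsPrimitiveRoot ζ n := Complex.isPrimitiveRoot_exp n hn0
  have hζk (k : ℕ) : (ζ ^ k) ^ n = 1 := by rw [pow_right_comm, hζ.pow_eq_one, one_pow]
  have hexp (j : ℕ) : Complex.exp (2 * (j * π / n) * Complex.I) = ζ ^ j := by
    rw [← Complex.exp_nat_mul]; ring_nf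
  apply Complex.ofReal_injective
  push_cast
  calc ∑ j ∈ Icc 1 (n - 1), 1 / Complex.sin (j * π / n) ^ 2
      = ∑ j ∈ Icc 1 (n - 1), -(2 / n) * ∑ k ∈ range n, (k : ℂ) * (n - k) * (ζ ^ k) ^ j := by
        refine sum_congr rfl fun j hj => ?_
        obtain ⟨hj1, hjn⟩ := mem_Icc.mp hj
        rw [Complex.one_div_sin_sq_eq_sum_range hn0 (by rw [hexp]; exact hζk j)
          (by rw [hexp]; exact hζ.pow_ne_one_of_pos_of_lt (by omega) (by omega)), hexp]
        simp only [pow_right_comm]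
    _ = -(2 / n) * ∑ k ∈ range n, (k : ℂ) * (n - k) * ∑ j ∈ Icc 1 (n - 1), (ζ ^ k) ^ j := by
        simp only [← mul_sum, sum_comm (s := Icc 1 (n - 1))]
    _ = -(2 / n) * ∑ k ∈ range n, (k : ℂ) * (n - k) * (-1) := by
        refine congrArg _ (sum_congr rfl fun k hk => ?_)
        rcases Nat.eq_zero_or_pos k with rfl | hk0
        · simp
        rw [sum_Icc_one_pow_eq_neg_one_of_pow_eq_one hn0 (hζk k)
          (hζ.pow_ne_one_of_pos_of_lt hk0.ne' (mem_range.mp hk))]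
    _ = ((n : ℂ) ^ 2 - 1) / 3 := by
        have h6 := six_mul_sum_range_mul_sub (R := ℂ) n
        rw [← sum_mul]
        field_simp
        linear_combination h6
end

section
/- With the matrix M(k) as above for g = 3, the expression 2³ · det M(k) / (2!·4!·6!) is a polynomial in k of degree 6 with rational coefficients whose value at k = 0 is 1, and it satisfies Q(k) = Q(-2-k) for all k. -/
open Polynomial

/-!
With `u = k + 1`, every row `r ≥ 1` of the Verlinde matrix is an odd function of `u` while row `0`
is constant, so the substitution `k ↦ -2 - k` (that is, `u ↦ -u`) multiplies the determinant by
`(-1)^(g-1)`; for `g = 3` this is the Serre-duality symmetry. Degree and constant term are read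
off the explicit expansion of the `3 × 3` determinant.
-/

/-- The genus-`g` Verlinde matrix over ℚ: `M_{0,s} = 1` and
`M_{r,s} = (k+1+r)^{2s+2} - (k+1-r)^{2s+2}` for `r ≥ 1`. -/
def verlindeMatrix (g : ℕ) (k : ℚ) : Matrix (Fin g) (Fin g) ℚ :=
  fun r s => if (r : ℕ) = 0 then 1
    else (k + 1 + (r : ℕ)) ^ (2 * (s : ℕ) + 2) - (k + 1 - (r : ℕ)) ^ (2 * (s : ℕ) + 2)

lemma verlindeMatrix_neg_two_sub {g : ℕ} (k : ℚ) (r s : Fin g) :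
    verlindeMatrix g (-2 - k) r s = (if (r : ℕ) = 0 then 1 else -1) * verlindeMatrix g k r s := by
  unfold verlindeMatrix
  split_ifs
  · rw [one_mul]
  · have hpow : Even (2 * (s : ℕ) + 2) := ⟨(s : ℕ) + 1, by ring⟩
    rw [show -2 - k + 1 + (r : ℕ) = -(k + 1 - (r : ℕ)) by ring,
      show -2 - k + 1 - (r : ℕ) = -(k + 1 + (r : ℕ)) by ring, hpow.neg_pow, hpow.neg_pow]
    ring

lemma prod_fin_ite_zero_one_neg_one (g : ℕ) :
    ∏ r : Fin g, (if (r : ℕ) = 0 then (1 : ℚ) else -1) = (-1) ^ (g - 1) := by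
  cases g with
  | zero => simp
  | succ n => simp [Fin.prod_univ_succ]

theorem det_verlindeMatrix_neg_two_sub (g : ℕ) (k : ℚ) :
    (verlindeMatrix g (-2 - k)).det = (-1) ^ (g - 1) * (verlindeMatrix g k).det := by
  rw [← prod_fin_ite_zero_one_neg_one, ← Matrix.det_mul_column]
  congr 1
  ext r s
  exact verlindeMatrix_neg_two_sub k r s

noncomputable def hilbertPolyGenusThree : ℚ[X] :=
  C (14/45) * X^6 + C (28/15) * X^5 + C (46/9) * X^4 + C 8 * X^3
    + C (341/45) * X^2 + C (62/15) * X + C 1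

lemma eval_hilbertPolyGenusThree (k : ℚ) : hilbertPolyGenusThree.eval k =
    14/45 * k^6 + 28/15 * k^5 + 46/9 * k^4 + 8 * k^3 + 341/45 * k^2 + 62/15 * k + 1 := by
  simp [hilbertPolyGenusThree]

lemma natDegree_hilbertPolyGenusThree : hilbertPolyGenusThree.natDegree = 6 := by
  unfold hilbertPolyGenusThree
  compute_degree!

lemma eval_hilbertPolyGenusThree_eq_det (k : ℚ) : hilbertPolyGenusThree.eval k =
    2 ^ 3 * (verlindeMatrix 3 k).det /
      ((Nat.factorial 2 : ℚ) * (Nat.factorial 4 : ℚ) * (Nat.factorial 6 : ℚ)) := by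
  rw [eval_hilbertPolyGenusThree, Matrix.det_fin_three]
  simp only [verlindeMatrix, Fin.val_zero, Fin.val_one, Fin.val_two, Nat.factorial]
  norm_num
  ring

theorem verlinde_genus_three_polynomial :
    ∃ Q : Polynomial ℚ,
      (∀ k : ℚ, Q.eval k =
          2 ^ 3 * (verlindeMatrix 3 k).det /
            ((Nat.factorial 2 : ℚ) * (Nat.factorial 4 : ℚ) * (Nat.factorial 6 : ℚ))) ∧
      Q.natDegree = 6 ∧ Q.eval 0 = 1 ∧ (∀ k : ℚ, Q.eval k = Q.eval (-2 - k)) := by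
  refine ⟨hilbertPolyGenusThree, eval_hilbertPolyGenusThree_eq_det,
    natDegree_hilbertPolyGenusThree, by simp [eval_hilbertPolyGenusThree], fun k => ?_⟩
  rw [eval_hilbertPolyGenusThree_eq_det, eval_hilbertPolyGenusThree_eq_det,
    det_verlindeMatrix_neg_two_sub]
  norm_num
end
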